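/- arXiv:1101.0136 — 2 statements merged into one kernel-verified Lean document; each statement's English description precedes it below -/
import Mathlib

section
/- Let α, β ∈ Δ with α ≠ β, and let f(z) = (z-α)(z-β)/(1-|z|²) for z ∈ Δ. Then for every circle Γ contained in Δ with hyperbolic center α or hyperbolic center β, the restriction of f to Γ extends holomorphically through the disc bounded by Γ. -/
open Complex Metric

/-!
Let `Γ = M_a(sphere 0 R)` with `M_a(w) = (a - w) / (1 - conj a * w)` and `a` in the unit disc.
Since `M_a` is an involution, `z ∈ Γ` means `z = M_a(w)` with `w = M_a(z)` and `w * conj w = R²`.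
Combined with `1 - |M_a(w)|² = (1 - |a|²)(1 - |w|²) / |1 - conj a * w|²` this gives, on `Γ`,
`(z - a) / (1 - |z|²) = (a R² - M_a(z)) / (1 - R²)`,
and the right-hand side is holomorphic on the whole disc: along `Γ`, `1 - |z|²` extends to a
rational function with a simple zero at the hyperbolic center `a` (and its pole at
`M_a(a R²)`, the Euclidean center). Hence if `a ∈ {α, β}`, the factor `z - a` of
`(z - α)(z - β)` cancels it and the quotient extends holomorphically across the disc bounded by `Γ`.
-/

open ComplexConjugate

noncomputable def diskMobius (a w : ℂ) : ℂ := (a - w) / (1 - conj a * w)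

section
variable {a w : ℂ}

lemma one_sub_conj_mul_ne_zero (ha : ‖a‖ < 1) (hw : ‖w‖ ≤ 1) : 1 - conj a * w ≠ 0 := by
  refine sub_ne_zero.2 fun h => ?_
  have : ‖conj a * w‖ < 1 := by
    rw [norm_mul, RCLike.norm_conj]
    nlinarith [norm_nonneg a, norm_nonneg w]
  simp [← h] at this

lemma one_sub_ofReal_norm_sq_ne_zero (hw : ‖w‖ < 1) : 1 - (‖w‖ : ℂ) ^ 2 ≠ 0 := by
  exact_mod_cast (by nlinarith [norm_nonneg w] : (1 : ℝ) - ‖w‖ ^ 2 ≠ 0)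

lemma one_sub_normSq_diskMobius (h : 1 - conj a * w ≠ 0) :
    1 - normSq (diskMobius a w) = (1 - normSq a) * (1 - normSq w) / normSq (1 - conj a * w) := by
  have hs : normSq (1 - conj a * w) ≠ 0 := normSq_eq_zero.not.2 h
  rw [diskMobius, normSq_div, eq_div_iff hs, sub_mul, div_mul_cancel₀ _ hs]
  apply ofReal_injective
  push_cast
  simp only [← mul_conj, map_sub, map_mul, map_one, conj_conj]
  ring

lemma norm_diskMobius_lt_one (ha : ‖a‖ < 1) (hw : ‖w‖ < 1) : ‖diskMobius a w‖ < 1 := by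
  have hs := one_sub_conj_mul_ne_zero ha hw.le
  have hpos : 0 < 1 - normSq (diskMobius a w) := by
    have ha' : normSq a < 1 := by rw [← Complex.sq_norm]; nlinarith [norm_nonneg a]
    have hw' : normSq w < 1 := by rw [← Complex.sq_norm]; nlinarith [norm_nonneg w]
    have hs' : 0 < normSq (1 - conj a * w) := normSq_pos.2 hs
    rw [one_sub_normSq_diskMobius hs]
    exact div_pos (mul_pos (sub_pos.2 ha') (sub_pos.2 hw')) hs'
  rw [← Complex.sq_norm] at hpos
  nlinarith [norm_nonneg (diskMobius a w)]

lemma diskMobius_diskMobius (ha : ‖a‖ < 1) (h : 1 - conj a * w ≠ 0) :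
    diskMobius a (diskMobius a w) = w := by
  have ha' : 1 - a * conj a ≠ 0 := by
    simpa [mul_comm] using one_sub_conj_mul_ne_zero ha ha.le
  have h' : 1 - w * conj a ≠ 0 := by rwa [mul_comm]
  rw [diskMobius, diskMobius]
  field_simp
  rw [div_eq_iff (by convert ha' using 1; ring)]
  ring

lemma differentiableOn_diskMobius (ha : ‖a‖ < 1) :
    DifferentiableOn ℂ (diskMobius a) (ball 0 1) :=
  DifferentiableOn.div (by fun_prop) (by fun_prop) fun _ hz =>
    one_sub_conj_mul_ne_zero ha (mem_ball_zero_iff.1 hz).le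

lemma diskMobius_sub_self_div (ha : ‖a‖ < 1) (hw : ‖w‖ < 1) :
    (diskMobius a w - a) / (1 - (‖diskMobius a w‖ : ℂ) ^ 2) =
      (a * ‖w‖ ^ 2 - w) / (1 - ‖w‖ ^ 2) := by
  have hz := one_sub_ofReal_norm_sq_ne_zero (norm_diskMobius_lt_one ha hw)
  rw [div_eq_div_iff hz (one_sub_ofReal_norm_sq_ne_zero hw)]
  have hs : 1 - w * conj a ≠ 0 := by rw [mul_comm]; exact one_sub_conj_mul_ne_zero ha hw.le
  have hs' : 1 - a * conj w ≠ 0 := by simpa [mul_comm] using (map_ne_zero conj).2 hs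
  simp only [← mul_conj', diskMobius, map_div₀, map_sub, map_mul, map_one, conj_conj] at hz ⊢
  field_simp
  ring

lemma sub_div_one_sub_sq_norm_of_mem_image_sphere (ha : ‖a‖ < 1) {R : ℝ} (hR : R < 1) {z : ℂ}
    (hz : z ∈ diskMobius a '' sphere 0 R) :
    (z - a) / (1 - (‖z‖ : ℂ) ^ 2) = (a * R ^ 2 - diskMobius a z) / (1 - R ^ 2) := by
  obtain ⟨w, hw, rfl⟩ := hz
  rw [mem_sphere_zero_iff_norm] at hw
  rw [diskMobius_diskMobius ha (one_sub_conj_mul_ne_zero ha (hw ▸ hR.le)),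
    diskMobius_sub_self_div ha (hw ▸ hR), hw]

end

theorem stmt3_general (α β : ℂ) (hα : α ∈ ball (0:ℂ) 1) (hβ : β ∈ ball (0:ℂ) 1)
    (f : ℂ → ℂ)
    (hf : ∀ z ∈ ball (0:ℂ) 1, f z = (z - α) * (z - β) / (1 - (‖z‖ : ℂ)^2)) :
    ∀ γ ∈ ({α, β} : Set ℂ), ∀ R : ℝ, 0 < R → R < 1 →
      ∀ c : ℂ, ∀ ρ : ℝ, 0 < ρ →
        sphere c ρ = (fun ζ => (γ - ζ) / (1 - starRingEnd ℂ γ * ζ)) '' sphere (0:ℂ) R →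
        ∃ g : ℂ → ℂ, ContinuousOn g (closedBall c ρ) ∧ DifferentiableOn ℂ g (ball c ρ) ∧
          ∀ z ∈ sphere c ρ, g z = f z := by
  intro γ hγ R _ hR c ρ hρ hΓ
  have hγ1 : ‖γ‖ < 1 := by
    rcases hγ with rfl | rfl
    exacts [mem_ball_zero_iff.1 hα, mem_ball_zero_iff.1 hβ]
  obtain ⟨δ, hδ⟩ : ∃ δ : ℂ, ∀ z : ℂ, (z - α) * (z - β) = (z - γ) * (z - δ) := by
    rcases hγ with rfl | rfl
    exacts [⟨β, fun _ => rfl⟩, ⟨α, fun _ => mul_comm _ _⟩]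
  have hΓ_disc : sphere c ρ ⊆ ball 0 1 := by
    rw [hΓ, Set.image_subset_iff]
    exact fun w hw => mem_ball_zero_iff.2 <|
      norm_diskMobius_lt_one hγ1 ((mem_sphere_zero_iff_norm.1 hw).trans_lt hR)
  have hB_disc : closedBall c ρ ⊆ ball 0 1 := by
    rw [← convexHull_sphere_eq_closedBall c hρ.le]
    exact (convex_ball 0 1).convexHull_subset_iff.2 hΓ_disc
  let g z := (z - δ) * ((γ * R ^ 2 - diskMobius γ z) / (1 - R ^ 2))
  have hg : DifferentiableOn ℂ g (ball 0 1) := by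
    have := differentiableOn_diskMobius hγ1
    fun_prop
  refine ⟨g, (hg.mono hB_disc).continuousOn, hg.mono (ball_subset_closedBall.trans hB_disc),
    fun z hz => ?_⟩
  rw [hf z (hΓ_disc hz), hδ, mul_comm (z - γ), mul_div_assoc,
    sub_div_one_sub_sq_norm_of_mem_image_sphere hγ1 hR (hΓ ▸ hz)]

/-- For `α ≠ β` in the unit disc, `f(z) = (z-α)(z-β)/(1-|z|²)` extends holomorphically
from every circle in `Δ` with hyperbolic center `α` or `β`. -/
theorem stmt3 (α β : ℂ) (hα : α ∈ ball (0:ℂ) 1) (hβ : β ∈ ball (0:ℂ) 1) (hne : α ≠ β)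
    (f : ℂ → ℂ)
    (hf : ∀ z ∈ ball (0:ℂ) 1, f z = (z - α) * (z - β) / (1 - (‖z‖ : ℂ)^2)) :
    ∀ γ ∈ ({α, β} : Set ℂ), ∀ R : ℝ, 0 < R → R < 1 →
      ∀ c : ℂ, ∀ ρ : ℝ, 0 < ρ →
        sphere c ρ = (fun ζ => (γ - ζ) / (1 - starRingEnd ℂ γ * ζ)) '' sphere (0:ℂ) R →
        ∃ g : ℂ → ℂ, ContinuousOn g (closedBall c ρ) ∧ DifferentiableOn ℂ g (ball c ρ) ∧
          ∀ z ∈ sphere c ρ, g z = f z :=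
  stmt3_general α β hα hβ f hf
end

section
/- The function f(z) = z(z - 1/2)/(1 - |z|²) on the open unit disc Δ extends holomorphically from every circle Γ ⊂ Δ with hyperbolic center 0 or hyperbolic center 1/2 (through the disc bounded by Γ), yet f is not holomorphic on Δ. -/
/-!
Write `M_α ζ = (α - ζ) / (1 - ᾱ ζ)`. On the circle `Γ = M_α '' {|ζ| = R}`, `z̄` is a rational
function of `z`, and substituting it turns `1 - |z|²` into
`(1 - R²) (1 - ᾱ z) (z - α) / ((1 - R² |α|²) z - (1 - R²) α)`, which has a simple zero at the
hyperbolic center `α` and a simple pole at the Euclidean center of `Γ`. A numerator `p` with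
`p α = 0` cancels the zero, so `p / (1 - |z|²)` agrees on `Γ` with a function holomorphic near the
closed disc bounded by `Γ`, since that disc lies in the unit disc.

Conversely, if `f = p / (1 - |z|²)` were holomorphic at a point `z₀ ≠ 0` with `p z₀ ≠ 0`, then
`z̄ = (f - p) / (z f)` would be holomorphic at `z₀`, which it is not.
-/

open Complex Metric
open ComplexConjugate

noncomputable def mobius (α ζ : ℂ) : ℂ := (α - ζ) / (1 - conj α * ζ)

lemma conj_mobius (α ζ : ℂ) : conj (mobius α ζ) = (conj α - conj ζ) / (1 - α * conj ζ) := by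
  simp [mobius, map_div₀]

lemma one_sub_conj_mul_ne_zero_s14 {α ζ : ℂ} (hα : ‖α‖ < 1) (hζ : ‖ζ‖ < 1) :
    1 - conj α * ζ ≠ 0 := by
  refine sub_ne_zero.mpr fun h => ?_
  have : ‖conj α * ζ‖ < 1 := by
    rw [norm_mul, RCLike.norm_conj]
    nlinarith [norm_nonneg α, norm_nonneg ζ]
  simp [← h] at this

lemma one_sub_sq_norm_ne_zero {z : ℂ} (hz : ‖z‖ ≠ 1) : 1 - (‖z‖ : ℂ) ^ 2 ≠ 0 := by
  rw [← ofReal_pow, ← ofReal_one, ← ofReal_sub, ofReal_ne_zero, sub_ne_zero, ne_comm,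
    Ne, pow_eq_one_iff_of_nonneg (norm_nonneg z) two_ne_zero]
  exact hz

lemma normSq_one_sub_conj_mul_sub_normSq_sub (α ζ : ℂ) :
    normSq (1 - conj α * ζ) - normSq (α - ζ) = (1 - normSq α) * (1 - normSq ζ) := by
  simp only [normSq_apply, sub_re, sub_im, mul_re, mul_im, conj_re, conj_im, one_re, one_im]
  ring

lemma norm_mobius_lt_one {α ζ : ℂ} (hα : ‖α‖ < 1) (hζ : ‖ζ‖ < 1) : ‖mobius α ζ‖ < 1 := by
  have hw := one_sub_conj_mul_ne_zero_s14 hα hζ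
  have key := normSq_one_sub_conj_mul_sub_normSq_sub α ζ
  simp only [normSq_eq_norm_sq] at key
  rw [mobius, norm_div, div_lt_one (norm_pos_iff.mpr hw)]
  have hpos : 0 < (1 - ‖α‖ ^ 2) * (1 - ‖ζ‖ ^ 2) := by
    apply mul_pos <;> nlinarith [norm_nonneg α, norm_nonneg ζ]
  exact lt_of_pow_lt_pow_left₀ 2 (norm_nonneg _) (by linarith)

lemma one_sub_mul_conj_mobius_mul (α ζ : ℂ) (hw : 1 - conj α * ζ ≠ 0) :
    (1 - mobius α ζ * conj (mobius α ζ)) *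
        ((1 - ζ * conj ζ * (α * conj α)) * mobius α ζ - (1 - ζ * conj ζ) * α) =
      (1 - ζ * conj ζ) * (1 - conj α * mobius α ζ) * (mobius α ζ - α) := by
  have hw' : 1 - α * conj ζ ≠ 0 := by
    intro h
    apply hw
    simpa using congrArg conj h
  rw [conj_mobius, mobius]
  generalize conj α = u at *
  generalize conj ζ = v at *
  rw [mul_comm] at hw
  field_simp
  ring

lemma closedBall_subset_of_sphere_subset {E : Type*} [NormedAddCommGroup E] [NormedSpace ℝ E]
    [Nontrivial E] {s : Set E} (hs : Convex ℝ s) {x : E} {r : ℝ} (h : sphere x r ⊆ s) :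
    closedBall x r ⊆ s := by
  rcases lt_or_ge r 0 with hr | hr
  · simp [closedBall_eq_empty.mpr hr]
  · rw [← convexHull_sphere_eq_closedBall x hr]
    exact convexHull_min h hs

theorem exists_extension_div_one_sub_sq_norm {p : ℂ → ℂ} {α : ℂ} (hα : ‖α‖ < 1)
    (hp : DifferentiableOn ℂ p (ball 0 1)) (hpα : p α = 0) {R : ℝ} (hR : R < 1) {c : ℂ}
    {ρ : ℝ} (hΓ : sphere c ρ = mobius α '' sphere 0 R) :
    ∃ g : ℂ → ℂ, ContinuousOn g (closedBall c ρ) ∧ DifferentiableOn ℂ g (ball c ρ) ∧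
      ∀ z ∈ sphere c ρ, g z = p z / (1 - (‖z‖ : ℂ) ^ 2) := by
  have hΓΔ : sphere c ρ ⊆ ball 0 1 := by
    rw [hΓ]
    rintro _ ⟨ζ, hζ, rfl⟩
    rw [mem_sphere_zero_iff_norm] at hζ
    exact mem_ball_zero_iff.mpr (norm_mobius_lt_one hα (hζ ▸ hR))
  have hBΔ := closedBall_subset_of_sphere_subset (convex_ball 0 1) hΓΔ
  have hden : ∀ z ∈ closedBall c ρ, 1 - conj α * z ≠ 0 := fun z hz =>
    one_sub_conj_mul_ne_zero_s14 hα (mem_ball_zero_iff.mp (hBΔ hz))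
  have hq : DifferentiableOn ℂ (dslope p α) (ball 0 1) :=
    (differentiableOn_dslope (isOpen_ball.mem_nhds (mem_ball_zero_iff.mpr hα))).mpr hp
  refine ⟨fun z => dslope p α z * ((1 - R ^ 2 * ‖α‖ ^ 2) * z - (1 - R ^ 2) * α) /
    (1 - conj α * z) / (1 - R ^ 2), ?_, ?_, ?_⟩
  · exact (ContinuousOn.div ((hq.continuousOn.mono hBΔ).mul (by fun_prop)) (by fun_prop)
      hden).div_const _
  · exact (DifferentiableOn.div ((hq.mono (ball_subset_closedBall.trans hBΔ)).mul
      (by fun_prop)) (by fun_prop) fun z hz => hden z (ball_subset_closedBall hz)).div_const _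
  · rw [hΓ]
    rintro _ ⟨ζ, hζ, rfl⟩
    rw [mem_sphere_zero_iff_norm] at hζ
    subst hζ
    have hz := one_sub_sq_norm_ne_zero (norm_mobius_lt_one hα hR).ne
    have hR2 : 1 - (‖ζ‖ : ℂ) ^ 2 ≠ 0 := one_sub_sq_norm_ne_zero hR.ne
    have hw := one_sub_conj_mul_ne_zero_s14 hα (norm_mobius_lt_one hα hR)
    have key := one_sub_mul_conj_mobius_mul α ζ (one_sub_conj_mul_ne_zero_s14 hα hR)
    simp only [mul_conj'] at key
    have hdslope := sub_smul_dslope_of_zero hpα (mobius α ζ)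
    rw [smul_eq_mul] at hdslope
    dsimp only
    rw [eq_div_iff hz, div_div, div_mul_eq_mul_div, div_eq_iff (mul_ne_zero hw hR2)]
    linear_combination dslope p α (mobius α ζ) * key +
      hdslope * ((1 - conj α * mobius α ζ) * (1 - (‖ζ‖ : ℂ) ^ 2))

lemma not_differentiableAt_conj (z : ℂ) : ¬ DifferentiableAt ℂ conj z := by
  intro h
  have hderiv := h.hasDerivAt.complexToReal_fderiv.unique (conjCLE : ℂ ≃L[ℝ] ℂ).hasFDerivAt
  have h1 := congrArg (fun L : ℂ →L[ℝ] ℂ => L 1) hderiv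
  have hI := congrArg (fun L : ℂ →L[ℝ] ℂ => L I) hderiv
  simp only [smul_apply, one_apply_eq_self, smul_eq_mul, mul_one, ContinuousLinearEquiv.coe_coe,
    ContinuousAlgEquiv.coeCLE_apply, conjCAE_apply, map_one, conj_I] at h1 hI
  rw [h1, one_mul] at hI
  norm_num [Complex.ext_iff] at hI

theorem not_differentiableAt_div_one_sub_sq_norm {p : ℂ → ℂ} {z₀ : ℂ}
    (hp : DifferentiableAt ℂ p z₀) (hpz₀ : p z₀ ≠ 0) (hz₀ : z₀ ≠ 0) (hz₀1 : ‖z₀‖ ≠ 1) :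
    ¬ DifferentiableAt ℂ (fun z => p z / (1 - (‖z‖ : ℂ) ^ 2)) z₀ := by
  set f := fun z => p z / (1 - (‖z‖ : ℂ) ^ 2)
  intro hf
  have hfz₀ : f z₀ ≠ 0 := div_ne_zero hpz₀ (one_sub_sq_norm_ne_zero hz₀1)
  have hconj : DifferentiableAt ℂ (fun w => (f w - p w) / (w * f w)) z₀ :=
    (hf.sub hp).div (differentiableAt_id.mul hf) (mul_ne_zero hz₀ hfz₀)
  refine not_differentiableAt_conj z₀ (hconj.congr_of_eventuallyEq ?_)
  have hnorm : ∀ᶠ w in nhds z₀, ‖w‖ ≠ 1 :=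
    (isOpen_ne_fun continuous_norm continuous_const).mem_nhds hz₀1
  filter_upwards [hf.continuousAt.eventually_ne hfz₀, eventually_ne_nhds hz₀, hnorm]
    with w hfw hw hw1
  have hpf : p w = f w * (1 - (‖w‖ : ℂ) ^ 2) :=
    (div_mul_cancel₀ (p w) (one_sub_sq_norm_ne_zero hw1)).symm
  rw [eq_div_iff (mul_ne_zero hw hfw)]
  linear_combination hpf + f w * mul_conj' w

/-- `f(z) = z(z-1/2)/(1-|z|²)` extends holomorphically from every circle in `Δ` with
hyperbolic center `0` or `1/2`, yet `f` is not holomorphic on `Δ`. -/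
theorem stmt14 :
    (∀ γ ∈ ({0, 1/2} : Set ℂ), ∀ R : ℝ, 0 < R → R < 1 →
      ∀ c : ℂ, ∀ ρ : ℝ, 0 < ρ →
        sphere c ρ = (fun ζ => (γ - ζ) / (1 - starRingEnd ℂ γ * ζ)) '' sphere (0:ℂ) R →
        ∃ g : ℂ → ℂ, ContinuousOn g (closedBall c ρ) ∧ DifferentiableOn ℂ g (ball c ρ) ∧
          ∀ z ∈ sphere c ρ, g z = z * (z - 1/2) / (1 - (‖z‖ : ℂ)^2)) ∧
    ¬ DifferentiableOn ℂ (fun z : ℂ => z * (z - 1/2) / (1 - (‖z‖ : ℂ)^2))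
        (ball (0:ℂ) 1) := by
  refine ⟨fun γ hγ R _ hR c ρ _ hΓ => ?_, fun hf => ?_⟩
  · have hγΔ : ‖γ‖ < 1 := by rcases hγ with rfl | rfl <;> norm_num
    have hpγ : γ * (γ - 1 / 2) = 0 := by rcases hγ with rfl | rfl <;> norm_num
    exact exists_extension_div_one_sub_sq_norm hγΔ (by fun_prop) hpγ hR hΓ
  · have hquarter : (1 / 4 : ℂ) ∈ ball (0 : ℂ) 1 := by norm_num
    exact not_differentiableAt_div_one_sub_sq_norm (by fun_prop) (by norm_num) (by norm_num)
      (by norm_num) (hf.differentiableAt (isOpen_ball.mem_nhds hquarter))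
end
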